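/- arXiv:1602.06221 — 6 statements merged into one kernel-verified Lean document; each statement's English description precedes it below -/
import Mathlib

section
/- Limit-colimit coincidence: let C be a Cpo-category, let (eₙ ◁ pₙ : Xₙ → Xₙ₊₁)ₙ be an ω-chain of embedding–projection pairs, and let (fₙ ◁ qₙ : Xₙ → X)ₙ be a family of embedding–projection pairs compatible with the chain, i.e. fₙ : Xₙ ⟶ X, qₙ : X ⟶ Xₙ satisfy fₙ ≫ qₙ = 𝟙 Xₙ, qₙ ≫ fₙ ≤ 𝟙 X, eₙ ≫ fₙ₊₁ = fₙ and qₙ₊₁ ≫ pₙ = qₙ. Then the following are equivalent: (1) the cocone (fₙ : Xₙ ⟶ X)ₙ is a colimit cocone in C of the ω-chain of embeddings (eₙ : Xₙ ⟶ Xₙ₊₁)ₙ; (2) the cone (qₙ : X ⟶ Xₙ)ₙ is a limit cone in C of the ωᵒᵖ-chain of projections (pₙ : Xₙ₊₁ ⟶ Xₙ)ₙ. -/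
open CategoryTheory OmegaCompletePartialOrder Limits

universe v u

/-- A `Cpo`-category: a category whose hom-sets carry an ω-complete partial
order such that composition is monotone and ω-continuous in each argument. -/
class CpoCategory (C : Type u) [Category.{v} C]
    [∀ X Y : C, OmegaCompletePartialOrder (X ⟶ Y)] : Prop where
  comp_le_comp : ∀ {X Y Z : C} {f f' : X ⟶ Y} {g g' : Y ⟶ Z},
      f ≤ f' → g ≤ g' → f ≫ g ≤ f' ≫ g'
  ωSup_comp : ∀ {X Y Z : C} (c : Chain (X ⟶ Y)) (g : Y ⟶ Z),
      ωSup c ≫ g = ωSup (c.map ⟨fun f => f ≫ g, fun _ _ h => comp_le_comp h le_rfl⟩)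
  comp_ωSup : ∀ {X Y Z : C} (f : X ⟶ Y) (c : Chain (Y ⟶ Z)),
      f ≫ ωSup c = ωSup (c.map ⟨fun g => f ≫ g, fun _ _ h => comp_le_comp le_rfl h⟩)

section Aux

variable {C : Type u} [Category.{v} C]

/-- The composite of embeddings from `Xs n` to `Xs (n + k)`. -/
def embChain (Xs : ℕ → C) (e : ∀ n, Xs n ⟶ Xs (n + 1)) (n : ℕ) :
    ∀ k, Xs n ⟶ Xs (n + k)
  | 0 => 𝟙 _
  | k + 1 => embChain Xs e n k ≫ e (n + k)

/-- The composite of projections from `Xs (n + k)` to `Xs n`. -/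
def projChain (Xs : ℕ → C) (p : ∀ n, Xs (n + 1) ⟶ Xs n) (n : ℕ) :
    ∀ k, Xs (n + k) ⟶ Xs n
  | 0 => 𝟙 _
  | k + 1 => p (n + k) ≫ projChain Xs p n k

lemma embChain_comp (Xs : ℕ → C) (e : ∀ n, Xs n ⟶ Xs (n + 1)) {W : C}
    (g : ∀ n, Xs n ⟶ W) (hg : ∀ n, e n ≫ g (n + 1) = g n) (n : ℕ) :
    ∀ k, embChain Xs e n k ≫ g (n + k) = g n
  | 0 => Category.id_comp _
  | k + 1 => by
    show (embChain Xs e n k ≫ e (n + k)) ≫ g (n + k + 1) = g n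
    rw [Category.assoc, hg (n + k), embChain_comp Xs e g hg n k]

lemma comp_projChain (Xs : ℕ → C) (p : ∀ n, Xs (n + 1) ⟶ Xs n) {W : C}
    (g : ∀ n, W ⟶ Xs n) (hg : ∀ n, g (n + 1) ≫ p n = g n) (n : ℕ) :
    ∀ k, g (n + k) ≫ projChain Xs p n k = g n
  | 0 => Category.comp_id _
  | k + 1 => by
    show g (n + k + 1) ≫ (p (n + k) ≫ projChain Xs p n k) = g n
    rw [← Category.assoc, hg (n + k), comp_projChain Xs p g hg n k]

lemma f_comp_q_of_le (Xs : ℕ → C) (X : C)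
    (e : ∀ n, Xs n ⟶ Xs (n + 1))
    (f : ∀ n, Xs n ⟶ X) (q : ∀ n, X ⟶ Xs n)
    (hfq : ∀ n, f n ≫ q n = 𝟙 (Xs n))
    (hf : ∀ n, e n ≫ f (n + 1) = f n) (n k : ℕ) :
    f n ≫ q (n + k) = embChain Xs e n k := by
  have h1 : embChain Xs e n k ≫ f (n + k) = f n := embChain_comp Xs e f hf n k
  rw [← h1, Category.assoc, hfq (n + k), Category.comp_id]

lemma f_comp_q_of_ge (Xs : ℕ → C) (X : C)
    (p : ∀ n, Xs (n + 1) ⟶ Xs n)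
    (f : ∀ n, Xs n ⟶ X) (q : ∀ n, X ⟶ Xs n)
    (hfq : ∀ n, f n ≫ q n = 𝟙 (Xs n))
    (hq : ∀ n, q (n + 1) ≫ p n = q n) (n k : ℕ) :
    f (n + k) ≫ q n = projChain Xs p n k := by
  have h1 : q (n + k) ≫ projChain Xs p n k = q n := comp_projChain Xs p q hq n k
  rw [← h1, ← Category.assoc, hfq (n + k), Category.id_comp]

variable [∀ X Y : C, OmegaCompletePartialOrder (X ⟶ Y)]

lemma ωSup_eventually_const {X Y : C} (c : Chain (X ⟶ Y)) (x : X ⟶ Y) (n : ℕ)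
    (h : ∀ k, c (n + k) = x) : ωSup c = x := by
  apply le_antisymm
  · apply ωSup_le
    intro m
    calc c m ≤ c (n + m) := c.monotone (Nat.le_add_left m n)
      _ = x := h m
  · rw [← h 0]; exact le_ωSup c n

end Aux

/-- Limit–colimit coincidence for ω-chains of embedding–projection pairs in a
`Cpo`-category: a compatible cone of embedding–projection pairs over the chain
is a colimit of the chain of embeddings (expressed by its universal property
among cocones over the chain of embeddings) if and only if it is a limit of the
ωᵒᵖ-chain of projections (expressed by its universal property among cones over
the chain of projections). -/
theorem limit_colimit_coincidence
    {C : Type u} [Category.{v} C] [∀ X Y : C, OmegaCompletePartialOrder (X ⟶ Y)]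
    [CpoCategory C]
    (Xs : ℕ → C) (X : C)
    (e : ∀ n, Xs n ⟶ Xs (n + 1)) (p : ∀ n, Xs (n + 1) ⟶ Xs n)
    (f : ∀ n, Xs n ⟶ X) (q : ∀ n, X ⟶ Xs n)
    (hep : ∀ n, e n ≫ p n = 𝟙 (Xs n)) (hpe : ∀ n, p n ≫ e n ≤ 𝟙 (Xs (n + 1)))
    (hfq : ∀ n, f n ≫ q n = 𝟙 (Xs n)) (hqf : ∀ n, q n ≫ f n ≤ 𝟙 X)
    (hf : ∀ n, e n ≫ f (n + 1) = f n) (hq : ∀ n, q (n + 1) ≫ p n = q n) :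
    ((∀ (W : C) (g : ∀ n, Xs n ⟶ W), (∀ n, e n ≫ g (n + 1) = g n) →
        ∃! u : X ⟶ W, ∀ n, f n ≫ u = g n)
      ↔
      (∀ (W : C) (g : ∀ n, W ⟶ Xs n), (∀ n, g (n + 1) ≫ p n = g n) →
        ∃! u : W ⟶ X, ∀ n, u ≫ q n = g n)) := by
  -- the canonical chain `q n ≫ f n : X ⟶ X`
  have cmono : Monotone fun m => q m ≫ f m := by
    apply monotone_nat_of_le_succ
    intro m
    calc q m ≫ f m = q (m + 1) ≫ (p m ≫ e m) ≫ f (m + 1) := by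
          rw [← hq m, ← hf m]; simp [Category.assoc]
      _ ≤ q (m + 1) ≫ 𝟙 _ ≫ f (m + 1) :=
          CpoCategory.comp_le_comp le_rfl (CpoCategory.comp_le_comp (hpe m) le_rfl)
      _ = q (m + 1) ≫ f (m + 1) := by simp
  set c : Chain (X ⟶ X) := ⟨fun m => q m ≫ f m, cmono⟩ with hc
  -- colimit universal property implies ωSup c = 𝟙 X
  have key1 : (∀ (W : C) (g : ∀ n, Xs n ⟶ W), (∀ n, e n ≫ g (n + 1) = g n) →
      ∃! u : X ⟶ W, ∀ n, f n ≫ u = g n) → ωSup c = 𝟙 X := by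
    intro H
    obtain ⟨u, hu, huniq⟩ := H X f hf
    have h1 : ∀ n, f n ≫ ωSup c = f n := by
      intro n
      rw [CpoCategory.comp_ωSup]
      apply ωSup_eventually_const _ _ n
      intro k
      show f n ≫ (q (n + k) ≫ f (n + k)) = f n
      rw [← Category.assoc, f_comp_q_of_le Xs X e f q hfq hf n k,
        embChain_comp Xs e f hf n k]
    rw [huniq _ h1, huniq _ (fun n => Category.comp_id _)]
  -- limit universal property implies ωSup c = 𝟙 X
  have key3 : (∀ (W : C) (g : ∀ n, W ⟶ Xs n), (∀ n, g (n + 1) ≫ p n = g n) →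
      ∃! u : W ⟶ X, ∀ n, u ≫ q n = g n) → ωSup c = 𝟙 X := by
    intro H
    obtain ⟨u, hu, huniq⟩ := H X q hq
    have h1 : ∀ n, ωSup c ≫ q n = q n := by
      intro n
      rw [CpoCategory.ωSup_comp]
      apply ωSup_eventually_const _ _ n
      intro k
      show (q (n + k) ≫ f (n + k)) ≫ q n = q n
      rw [Category.assoc, f_comp_q_of_ge Xs X p f q hfq hq n k,
        comp_projChain Xs p q hq n k]
    rw [huniq _ h1, huniq _ (fun n => Category.id_comp _)]
  -- ωSup c = 𝟙 X implies the limit universal property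
  have key2 : ωSup c = 𝟙 X → (∀ (W : C) (g : ∀ n, W ⟶ Xs n),
      (∀ n, g (n + 1) ≫ p n = g n) → ∃! u : W ⟶ X, ∀ n, u ≫ q n = g n) := by
    intro hsup W g hg
    have dmono : Monotone fun m => g m ≫ f m := by
      apply monotone_nat_of_le_succ
      intro m
      calc g m ≫ f m = g (m + 1) ≫ (p m ≫ e m) ≫ f (m + 1) := by
            rw [← hg m, ← hf m]; simp [Category.assoc]
        _ ≤ g (m + 1) ≫ 𝟙 _ ≫ f (m + 1) :=
            CpoCategory.comp_le_comp le_rfl (CpoCategory.comp_le_comp (hpe m) le_rfl)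
        _ = g (m + 1) ≫ f (m + 1) := by simp
    refine ⟨ωSup ⟨fun m => g m ≫ f m, dmono⟩, ?_, ?_⟩
    · intro n
      rw [CpoCategory.ωSup_comp]
      apply ωSup_eventually_const _ _ n
      intro k
      show (g (n + k) ≫ f (n + k)) ≫ q n = g n
      rw [Category.assoc, f_comp_q_of_ge Xs X p f q hfq hq n k,
        comp_projChain Xs p g hg n k]
    · intro u' hu'
      have : u' ≫ ωSup c = u' := by rw [hsup, Category.comp_id]
      rw [← this, CpoCategory.comp_ωSup]
      congr 1
      apply Chain.ext
      funext m
      show u' ≫ (q m ≫ f m) = g m ≫ f m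
      rw [← Category.assoc, hu' m]
  -- ωSup c = 𝟙 X implies the colimit universal property
  have key4 : ωSup c = 𝟙 X → (∀ (W : C) (g : ∀ n, Xs n ⟶ W),
      (∀ n, e n ≫ g (n + 1) = g n) → ∃! u : X ⟶ W, ∀ n, f n ≫ u = g n) := by
    intro hsup W g hg
    have dmono : Monotone fun m => q m ≫ g m := by
      apply monotone_nat_of_le_succ
      intro m
      calc q m ≫ g m = q (m + 1) ≫ (p m ≫ e m) ≫ g (m + 1) := by
            rw [← hq m, ← hg m]; simp [Category.assoc]
        _ ≤ q (m + 1) ≫ 𝟙 _ ≫ g (m + 1) :=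
            CpoCategory.comp_le_comp le_rfl (CpoCategory.comp_le_comp (hpe m) le_rfl)
        _ = q (m + 1) ≫ g (m + 1) := by simp
    refine ⟨ωSup ⟨fun m => q m ≫ g m, dmono⟩, ?_, ?_⟩
    · intro n
      rw [CpoCategory.comp_ωSup]
      apply ωSup_eventually_const _ _ n
      intro k
      show f n ≫ (q (n + k) ≫ g (n + k)) = g n
      rw [← Category.assoc, f_comp_q_of_le Xs X e f q hfq hf n k,
        embChain_comp Xs e g hg n k]
    · intro u' hu'
      have : ωSup c ≫ u' = u' := by rw [hsup, Category.id_comp]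
      rw [← this, CpoCategory.ωSup_comp]
      congr 1
      apply Chain.ext
      funext m
      show (q m ≫ f m) ≫ u' = q m ≫ g m
      rw [Category.assoc, hu' m]
  exact ⟨fun H => key2 (key1 H), fun H => key4 (key3 H)⟩
end

section
/- Freyd's compactness theorem: let C be a Cpo⊥-category such that every Cpo-endofunctor of C has an initial algebra. Then C is Cpo-algebraically compact; explicitly, for every Cpo-endofunctor F : C ⥤ C, if (A, a : F.obj A ⟶ A) is an initial F-algebra then a is an isomorphism and the coalgebra (A, a⁻¹ : A ⟶ F.obj A) is a terminal F-coalgebra. -/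
open CategoryTheory OmegaCompletePartialOrder Limits

universe v u

/-- A `Cpo⊥`-category: a `Cpo`-category whose hom-sets have least elements and
whose composition is strict in each argument. -/
class CpoBotCategory (C : Type u) [Category.{v} C]
    [∀ X Y : C, OmegaCompletePartialOrder (X ⟶ Y)]
    [∀ X Y : C, OrderBot (X ⟶ Y)] extends CpoCategory C : Prop where
  bot_comp : ∀ {X Y Z : C} (g : Y ⟶ Z), (⊥ : X ⟶ Y) ≫ g = (⊥ : X ⟶ Z)
  comp_bot : ∀ {X Y Z : C} (f : X ⟶ Y), f ≫ (⊥ : Y ⟶ Z) = (⊥ : X ⟶ Z)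

/-- A `Cpo`-functor: a functor between `Cpo`-categories whose action on
hom-sets is monotone and preserves suprema of ω-chains. -/
def IsCpoFunctor {C : Type u} {D : Type u} [Category.{v} C] [Category.{v} D]
    [∀ X Y : C, OmegaCompletePartialOrder (X ⟶ Y)]
    [∀ X Y : D, OmegaCompletePartialOrder (X ⟶ Y)] (F : C ⥤ D) : Prop :=
  ∀ (X Y : C), ∃ hm : Monotone (fun f : X ⟶ Y => F.map f),
    ∀ c : Chain (X ⟶ Y), F.map (ωSup c) = ωSup (c.map ⟨fun f => F.map f, hm⟩)

/-!
Write `a⁻¹` for the inverse of the structure map of the initial algebra `A` (Lambek). For a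
coalgebra `x : X ⟶ F X`, the map `g ↦ x ≫ F g ≫ a` on `X ⟶ A` is ω-continuous, so it has a least
fixed point, the Kleene supremum of its iterates from `⊥`; its fixed points are exactly the
coalgebra morphisms `X ⟶ (A, a⁻¹)`, so one exists. Strictness of composition makes this least
fixed point natural in `X`: precomposing with a coalgebra morphism `m` carries the iterates for
the target to those for the source. For `X = (A, a⁻¹)` the least fixed point is an algebra
endomorphism of `A`, hence `𝟙` by initiality, and so every coalgebra morphism `m` into `(A, a⁻¹)`
equals `m ≫ 𝟙`, the least fixed point for its source.
-/

namespace OmegaCompletePartialOrder.ContinuousHom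

variable {α β : Type*} [OmegaCompletePartialOrder α] [OrderBot α]
  [OmegaCompletePartialOrder β] [OrderBot β]

def lfp (f : α →𝒄 α) : α :=
  ωSup (fixedPoints.iterateChain f ⊥ bot_le)

theorem map_lfp (f : α →𝒄 α) : f (lfp f) = lfp f :=
  fixedPoints.ωSup_iterate_mem_fixedPoint f ⊥ bot_le

theorem map_lfp_of_semiconj {f : α →𝒄 α} {g : β →𝒄 β} (h : α →𝒄 β) (h_bot : h ⊥ = ⊥)
    (h_semiconj : Function.Semiconj h f g) : h (lfp f) = lfp g := by
  have h_iterate (n : ℕ) : h (f^[n] ⊥) = g^[n] ⊥ := by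
    rw [(h_semiconj.iterate_right n) ⊥, h_bot]
  rw [lfp, h.continuous]
  exact congrArg ωSup (Chain.ext (funext h_iterate))

end OmegaCompletePartialOrder.ContinuousHom

section

variable {C : Type u} [Category.{v} C] [∀ X Y : C, OmegaCompletePartialOrder (X ⟶ Y)]

theorem IsCpoFunctor.ωScottContinuous_map {D : Type u} [Category.{v} D]
    [∀ X Y : D, OmegaCompletePartialOrder (X ⟶ Y)] {F : C ⥤ D} (hF : IsCpoFunctor F)
    (X Y : C) : ωScottContinuous (F.map : (X ⟶ Y) → _) :=
  ωScottContinuous_iff_monotone_map_ωSup.2 (hF X Y)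

namespace CpoCategory

variable [CpoCategory C]

theorem ωScottContinuous_comp_left {X Y Z : C} (f : X ⟶ Y) :
    ωScottContinuous (fun g : Y ⟶ Z => f ≫ g) :=
  ωScottContinuous_iff_monotone_map_ωSup.2 ⟨_, comp_ωSup f⟩

theorem ωScottContinuous_comp_right {X Y Z : C} (g : Y ⟶ Z) :
    ωScottContinuous (fun f : X ⟶ Y => f ≫ g) :=
  ωScottContinuous_iff_monotone_map_ωSup.2 ⟨_, fun c => ωSup_comp c g⟩

end CpoCategory

end

namespace CategoryTheory.Endofunctor

open OmegaCompletePartialOrder.ContinuousHom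

variable {C : Type u} [Category.{v} C] [∀ X Y : C, OmegaCompletePartialOrder (X ⟶ Y)]
  {F : C ⥤ C}

section CpoCategory

variable [CpoCategory C]

def hyloStep (hF : IsCpoFunctor F) (V : Coalgebra F) (W : Algebra F) :
    (V.V ⟶ W.a) →𝒄 (V.V ⟶ W.a) :=
  ofFun (fun g => V.str ≫ F.map g ≫ W.str)
    ((CpoCategory.ωScottContinuous_comp_left V.str).comp
      ((CpoCategory.ωScottContinuous_comp_right W.str).comp (hF.ωScottContinuous_map _ _)))

variable [∀ X Y : C, OrderBot (X ⟶ Y)]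

def hylo (hF : IsCpoFunctor F) (V : Coalgebra F) (W : Algebra F) : V.V ⟶ W.a :=
  lfp (hyloStep hF V W)

theorem str_comp_map_hylo_comp_str (hF : IsCpoFunctor F) (V : Coalgebra F) (W : Algebra F) :
    V.str ≫ F.map (hylo hF V W) ≫ W.str = hylo hF V W :=
  map_lfp (hyloStep hF V W)

namespace Algebra.Initial

variable {A : Algebra F} (hA : IsInitial A)

abbrev coalgebra : Coalgebra F := ⟨A.a, strInv hA⟩

theorem hylo_coalgebra_eq_id (hF : IsCpoFunctor F) : hylo hF (coalgebra hA) A = 𝟙 A.a := by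
  have h_fix := str_comp_map_hylo_comp_str hF (coalgebra hA) A
  let e : A ⟶ A :=
    { f := hylo hF (coalgebra hA) A
      h := by conv_rhs => rw [← h_fix, ← Category.assoc, right_inv hA, Category.id_comp] }
  exact congrArg Algebra.Hom.f (hA.hom_ext e (𝟙 A))

end Algebra.Initial

end CpoCategory

variable [∀ X Y : C, OrderBot (X ⟶ Y)] [CpoBotCategory C]

theorem Coalgebra.Hom.comp_hylo (hF : IsCpoFunctor F) {V₀ V₁ : Coalgebra F}
    (m : V₀ ⟶ V₁) (W : Algebra F) : m.f ≫ hylo hF V₁ W = hylo hF V₀ W := by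
  let precomp : (V₁.V ⟶ W.a) →𝒄 (V₀.V ⟶ W.a) :=
    ofFun (m.f ≫ ·) (CpoCategory.ωScottContinuous_comp_left m.f)
  refine map_lfp_of_semiconj precomp (CpoBotCategory.comp_bot m.f) fun g => ?_
  change m.f ≫ V₁.str ≫ F.map g ≫ W.str = V₀.str ≫ F.map (m.f ≫ g) ≫ W.str
  rw [← Category.assoc, ← m.h, F.map_comp, Category.assoc, Category.assoc]

def Algebra.Initial.isTerminalCoalgebra {A : Algebra F} (hA : IsInitial A)
    (hF : IsCpoFunctor F) : IsTerminal (Algebra.Initial.coalgebra hA) :=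
  IsTerminal.ofUniqueHom
    (fun V =>
      { f := hylo hF V A
        h := by
          conv_rhs => rw [← str_comp_map_hylo_comp_str hF V A]
          rw [Category.assoc, Category.assoc, Initial.right_inv hA, Category.comp_id] })
    (fun V m => Coalgebra.Hom.ext <| by
      change m.f = hylo hF V A
      rw [← m.comp_hylo hF, Algebra.Initial.hylo_coalgebra_eq_id hA hF, Category.comp_id])

end CategoryTheory.Endofunctor

/-- Freyd's compactness theorem: a `Cpo⊥`-category in which every
`Cpo`-endofunctor has an initial algebra is `Cpo`-algebraically compact: the
structure map of any initial algebra of a `Cpo`-endofunctor is an isomorphism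
whose inverse makes the carrier a terminal coalgebra. -/
theorem freyd_compactness
    {C : Type u} [Category.{v} C] [∀ X Y : C, OmegaCompletePartialOrder (X ⟶ Y)]
    [∀ X Y : C, OrderBot (X ⟶ Y)] [CpoBotCategory C]
    (hcomplete : ∀ F : C ⥤ C, IsCpoFunctor F →
        ∃ A : Endofunctor.Algebra F, Nonempty (IsInitial A))
    (F : C ⥤ C) (hF : IsCpoFunctor F)
    (A : Endofunctor.Algebra F) (hA : IsInitial A) :
    ∃ b : A.a ⟶ F.obj A.a, A.str ≫ b = 𝟙 (F.obj A.a) ∧ b ≫ A.str = 𝟙 A.a ∧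
      Nonempty (IsTerminal (⟨A.a, b⟩ : Endofunctor.Coalgebra F)) :=
  ⟨_, Endofunctor.Algebra.Initial.right_inv hA, Endofunctor.Algebra.Initial.left_inv hA,
    ⟨Endofunctor.Algebra.Initial.isTerminalCoalgebra hA hF⟩⟩
end

section
/- Let D and E be categories and G : D ⥤ E, H : E ⥤ D functors. If (X, h : H.obj (G.obj X) ⟶ X) is an initial algebra for the endofunctor G ⋙ H of D, then (G.obj X, G.map h : G.obj (H.obj (G.obj X)) ⟶ G.obj X) is an initial algebra for the endofunctor H ⋙ G of E. -/
open CategoryTheory Limits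

universe v u v₁ u₁

/-- If `(X, h)` is an initial algebra for `G ⋙ H`, then `(G.obj X, G.map h)`
is an initial algebra for `H ⋙ G`. -/
theorem initial_algebra_swap {D : Type u} {E : Type u₁} [Category.{v} D] [Category.{v₁} E]
    (G : D ⥤ E) (H : E ⥤ D)
    (A : Endofunctor.Algebra (G ⋙ H)) (hA : IsInitial A) :
    Nonempty (IsInitial (⟨G.obj A.a, G.map A.str⟩ : Endofunctor.Algebra (H ⋙ G))) := by
  constructor
  refine IsInitial.ofUniqueHom (fun B => ?_) (fun B m => ?_)
  · -- existence
    refine ⟨G.map (hA.to ⟨H.obj B.a, H.map B.str⟩).f ≫ B.str, ?_⟩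
    have hf := (hA.to (⟨H.obj B.a, H.map B.str⟩ : Endofunctor.Algebra (G ⋙ H))).h
    dsimp at hf ⊢
    have := congrArg (fun t => G.map t ≫ B.str) hf
    simpa using this
  · -- uniqueness
    have hm := m.h
    dsimp at hm
    -- the inverse of A.str (Lambek)
    set i := Endofunctor.Algebra.Initial.strInv hA with hi
    have hleft : i ≫ A.str = 𝟙 _ := Endofunctor.Algebra.Initial.left_inv hA
    have hright : A.str ≫ i = 𝟙 _ := Endofunctor.Algebra.Initial.right_inv hA
    -- build an algebra morphism A ⟶ ⟨H.obj B.a, H.map B.str⟩ from m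
    have hn : (G ⋙ H).map (i ≫ H.map m.f) ≫ H.map B.str = A.str ≫ (i ≫ H.map m.f) := by
      dsimp
      rw [Functor.map_comp, Functor.map_comp, Category.assoc, ← H.map_comp, hm, H.map_comp,
        ← Category.assoc, ← H.map_comp, ← G.map_comp, hleft, ← Category.assoc, hright]
      simp
    have key : hA.to (⟨H.obj B.a, H.map B.str⟩ : Endofunctor.Algebra (G ⋙ H)) =
        ⟨i ≫ H.map m.f, hn⟩ := hA.hom_ext _ _
    apply Endofunctor.Algebra.Hom.ext
    dsimp
    rw [key]
    dsimp
    rw [Functor.map_comp, Category.assoc, hm, ← Category.assoc, ← G.map_comp, hleft]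
    simp
end

section
/- Let D and E be categories and G : D ⥤ E, H : E ⥤ D functors. If (X, z : X ⟶ H.obj (G.obj X)) is a terminal coalgebra for the endofunctor G ⋙ H of D, then (G.obj X, G.map z : G.obj X ⟶ G.obj (H.obj (G.obj X))) is a terminal coalgebra for the endofunctor H ⋙ G of E. -/
open CategoryTheory Limits

universe v u v₁ u₁

/-- Lambek's lemma for terminal coalgebras. -/
theorem coalgebra_str_isIso {C : Type u} [Category.{v} C] {F : C ⥤ C}
    (A : Endofunctor.Coalgebra F) (h : IsTerminal A) : IsIso A.str := by
  let FA : Endofunctor.Coalgebra F := ⟨F.obj A.V, F.map A.str⟩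
  let k : FA ⟶ A := h.from FA
  have hz : (⟨A.str, rfl⟩ : A ⟶ FA) ≫ k = 𝟙 A := h.hom_ext _ _
  have h1 : A.str ≫ k.f = 𝟙 A.V := congrArg Endofunctor.Coalgebra.Hom.f hz
  refine ⟨k.f, h1, ?_⟩
  have := k.h
  simp only [FA] at this
  rw [← this, ← F.map_comp, h1, F.map_id]

/-- If `(X, z)` is a terminal coalgebra for `G ⋙ H`, then `(G.obj X, G.map z)`
is a terminal coalgebra for `H ⋙ G`. -/
theorem terminal_coalgebra_swap {D : Type u} {E : Type u₁} [Category.{v} D] [Category.{v₁} E]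
    (G : D ⥤ E) (H : E ⥤ D)
    (B : Endofunctor.Coalgebra (G ⋙ H)) (hB : IsTerminal B) :
    Nonempty (IsTerminal (⟨G.obj B.V, G.map B.str⟩ : Endofunctor.Coalgebra (H ⋙ G))) := by
  have hiso : IsIso B.str := coalgebra_str_isIso B hB
  refine ⟨IsTerminal.ofUniqueHom (fun Y => ?_) (fun Y m => ?_)⟩
  · -- existence
    let HY : Endofunctor.Coalgebra (G ⋙ H) := ⟨H.obj Y.V, H.map Y.str⟩
    let f : HY ⟶ B := hB.from HY
    refine ⟨Y.str ≫ G.map f.f, ?_⟩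
    have hf : H.map Y.str ≫ H.map (G.map f.f) = f.f ≫ B.str := f.h
    dsimp
    rw [H.map_comp, hf, G.map_comp, ← Category.assoc]
  · -- uniqueness
    let HY : Endofunctor.Coalgebra (G ⋙ H) := ⟨H.obj Y.V, H.map Y.str⟩
    -- m.f : Y.V ⟶ G.obj B.V with Y.str ≫ G.map (H.map m.f) = m.f ≫ G.map B.str
    have hm : Y.str ≫ G.map (H.map m.f) = m.f ≫ G.map B.str := m.h
    -- H.map m.f ≫ inv B.str is a coalgebra hom HY ⟶ B
    have hhom : H.map Y.str ≫ H.map (G.map (H.map m.f ≫ inv B.str))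
        = (H.map m.f ≫ inv B.str) ≫ B.str := by
      rw [Category.assoc, IsIso.inv_hom_id, Category.comp_id,
        G.map_comp, H.map_comp, ← Category.assoc, ← H.map_comp, hm, H.map_comp,
        Category.assoc, ← H.map_comp, ← G.map_comp, IsIso.hom_inv_id, G.map_id, H.map_id,
        Category.comp_id]
    have huniq : (⟨H.map m.f ≫ inv B.str, hhom⟩ : HY ⟶ B) = hB.from HY := hB.hom_ext _ _
    have hval : H.map m.f ≫ inv B.str = (hB.from HY).f :=
      congrArg Endofunctor.Coalgebra.Hom.f huniq
    apply Endofunctor.Coalgebra.Hom.ext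
    dsimp
    have : H.map m.f = (hB.from HY).f ≫ B.str := by
      rw [← hval, Category.assoc, IsIso.inv_hom_id, Category.comp_id]
    have h2 : m.f ≫ G.map B.str = (Y.str ≫ G.map (hB.from HY).f) ≫ G.map B.str := by
      rw [← hm, this, G.map_comp, Category.assoc]
    have : IsIso (G.map B.str) := inferInstance
    exact ((cancel_mono (G.map B.str)).mp h2)
end

section
/- Let P and X be types, h : X → (P → X) ⊕ P a coalgebra, ≈ an equivalence relation on P, and R an equivalence relation on X. Then R is a ≈-bisimulation for h if and only if there exists a map h̄ : Quotient R → ((Quotient ≈ → Quotient R) ⊕ Quotient ≈) such that for every x : X: if h x = Sum.inl φ then h̄ ⟦x⟧ = Sum.inl ψ̄ where ψ̄ is the map sending ⟦p⟧ to ⟦φ p⟧ (in particular this map is well defined), and if h x = Sum.inr p then h̄ ⟦x⟧ = Sum.inr ⟦p⟧; i.e. R is a ≈-bisimulation exactly when the quotient projections X → Quotient R and P → Quotient ≈ carry h to a coalgebra of the functor Y ↦ (Quotient ≈ → Y) ⊕ Quotient ≈. -/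
universe u v

/-- `R` is a `≈`-bisimulation (w.r.t. the equivalence `S` on values `P`) for
the coalgebra `h : X → (P → X) ⊕ P`. -/
def IsApproxBisim {P : Type u} {X : Type v} (h : X → (P → X) ⊕ P)
    (S : Setoid P) (R : Setoid X) : Prop :=
  ∀ x y : X, R.r x y →
    (∀ φ : P → X, h x = Sum.inl φ →
        ∃ ψ : P → X, h y = Sum.inl ψ ∧ ∀ p q : P, S.r p q → R.r (φ p) (ψ q)) ∧
    (∀ p : P, h x = Sum.inr p → ∃ q : P, h y = Sum.inr q ∧ S.r p q)

/-- An equivalence relation `R` is a `≈`-bisimulation for `h` exactly when the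
quotient projections carry `h` to a coalgebra of
`Y ↦ (Quotient ≈ → Y) ⊕ Quotient ≈`. -/
theorem approxBisim_iff_quotient_coalgebra {P : Type u} {X : Type v}
    (h : X → (P → X) ⊕ P) (S : Setoid P) (R : Setoid X) :
    IsApproxBisim h S R ↔
      ∃ hbar : Quotient R → ((Quotient S → Quotient R) ⊕ Quotient S),
        ∀ x : X,
          (∀ φ : P → X, h x = Sum.inl φ →
              ∃ ψ : Quotient S → Quotient R, hbar (Quotient.mk R x) = Sum.inl ψ ∧
                ∀ p : P, ψ (Quotient.mk S p) = Quotient.mk R (φ p)) ∧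
          (∀ p : P, h x = Sum.inr p →
              hbar (Quotient.mk R x) = Sum.inr (Quotient.mk S p)) := by
  constructor
  · intro hb
    refine ⟨Quotient.lift (fun x => match hx : h x with
      | Sum.inl φ => Sum.inl (Quotient.lift (fun p => Quotient.mk R (φ p))
          (fun p q hpq => Quotient.sound (((hb x x (R.refl x)).1 φ hx).elim
            (fun ψ ⟨hψ, hr⟩ => by
              rw [hx] at hψ
              injection hψ with e
              exact e ▸ hr p q hpq))))
      | Sum.inr p => Sum.inr (Quotient.mk S p)) ?_, ?_⟩
    · intro x y hxy
      obtain ⟨h1, h2⟩ := hb x y hxy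
      split
      · next φ hx =>
        obtain ⟨ψ, hψ, hr⟩ := h1 φ hx
        split
        · next ψ' hy =>
          rw [hy] at hψ
          injection hψ with e
          subst e
          congr 1
          funext qp
          induction qp using Quotient.inductionOn with
          | h p => exact Quotient.sound (hr p p (S.refl p))
        · next q hy => rw [hy] at hψ; exact absurd hψ (by simp)
      · next p hx =>
        obtain ⟨q, hq, hpq⟩ := h2 p hx
        split
        · next φ hy => rw [hy] at hq; exact absurd hq (by simp)
        · next q' hy =>
          rw [hy] at hq
          injection hq with e
          subst e
          exact congrArg Sum.inr (Quotient.sound hpq)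
    · intro x
      constructor
      · intro φ hφ
        refine ⟨Quotient.lift (fun p => Quotient.mk R (φ p)) ?_, ?_, fun p => rfl⟩
        · intro p q hpq
          exact Quotient.sound (((hb x x (R.refl x)).1 φ hφ).elim
            (fun ψ ⟨hψ, hr⟩ => by
              rw [hφ] at hψ
              injection hψ with e
              exact e ▸ hr p q hpq))
        · show (match hx : h x with
            | Sum.inl φ => Sum.inl _
            | Sum.inr p => Sum.inr (Quotient.mk S p)) = _
          split
          · next φ' hφ' =>
            rw [hφ] at hφ'
            injection hφ' with e
            subst e
            rfl
          · next p hp => rw [hφ] at hp; exact absurd hp (by simp)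
      · intro p hp
        show (match hx : h x with
            | Sum.inl φ => Sum.inl _
            | Sum.inr p => Sum.inr (Quotient.mk S p)) = _
        split
        · next φ' hφ' => rw [hp] at hφ'; exact absurd hφ' (by simp)
        · next q hq =>
          rw [hp] at hq
          injection hq with e
          rw [e]
  · rintro ⟨hbar, hprop⟩ x y hxy
    have hq : Quotient.mk R x = Quotient.mk R y := Quotient.sound hxy
    constructor
    · intro φ hφ
      obtain ⟨ψ, hψ, hψr⟩ := (hprop x).1 φ hφ
      cases hy : h y with
      | inl φ' =>
        obtain ⟨ψ', hψ', hψr'⟩ := (hprop y).1 φ' hy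
        refine ⟨φ', rfl, fun p q hpq => ?_⟩
        rw [hq, hψ'] at hψ
        injection hψ with e
        subst e
        refine Quotient.exact ?_
        rw [← hψr p, ← hψr' q, Quotient.sound hpq]
      | inr p =>
        have := (hprop y).2 p hy
        rw [← hq, hψ] at this
        exact absurd this (by simp)
    · intro p hp
      have h1 := (hprop x).2 p hp
      cases hy : h y with
      | inl φ' =>
        obtain ⟨ψ', hψ', _⟩ := (hprop y).1 φ' hy
        rw [hq, hψ'] at h1
        exact absurd h1 (by simp)
      | inr q =>
        have h2 := (hprop y).2 q hy
        rw [hq, h2] at h1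
        injection h1 with e
        exact ⟨q, rfl, S.symm (Quotient.exact e)⟩
end

section
/- There is no type Z together with an equivalence (bijection) Z ≃ ((Z → Z) ⊕ Z). Consequently, for the family of endofunctors of Type given by 𝔉(V, W) = (X ↦ (V → X) ⊕ W), there is no endofunctor B of Type admitting a terminal B-coalgebra with carrier Z together with a natural isomorphism between B and the functor X ↦ (Z → X) ⊕ Z (i.e. the higher-order fixed-point equation B ≅ 𝔉(|νB|, |νB|) has no solution in Type). -/
open CategoryTheory Limits

universe u

/-- The endofunctor of `Type` given by `X ↦ (V → X) ⊕ W`. -/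
def inputOutputFunctor (V W : Type u) : Type u ⥤ Type u where
  obj X := (V → X) ⊕ W
  map f := TypeCat.ofHom fun x =>
    match x with
    | Sum.inl φ => Sum.inl (f ∘ φ)
    | Sum.inr w => Sum.inr w
  map_id := by intro X; ext x; cases x <;> rfl
  map_comp := by intros X Y Z f g; ext x; cases x <;> rfl

/-! A nontrivial `Z` already has too many maps `Z → Z` by Cantor's theorem, since two distinct
points turn every subset into its indicator map; a subsingleton `Z` has too few points for the
two summands. Through Lambek's lemma, the structure map of a terminal coalgebra of a functor
isomorphic to `X ↦ (Z → X) ⊕ Z` would be exactly such a bijection. -/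

open Function in
theorem not_injective_sum_arrow_self {Z : Type*} (f : (Z → Z) ⊕ Z → Z) : ¬ Injective f := by
  intro hf
  rcases subsingleton_or_nontrivial Z with hZ | ⟨a, b, hab⟩
  · exact Sum.inl_ne_inr (hf (Subsingleton.elim (f (.inl id)) (f (.inr (f (.inl id))))))
  · classical
    let indicator : Set Z → Z → Z := fun S z => if z ∈ S then a else b
    have indicator_injective : Injective indicator := fun S T hST => Set.ext fun z => by
      have hz := congrFun hST z
      by_cases hS : z ∈ S <;> by_cases hT : z ∈ T <;> simp_all [indicator, hab.symm]
    exact cantor_injective _ (hf.comp (Sum.inl_injective.comp indicator_injective))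

theorem isEmpty_equiv_sum_arrow_self (Z : Type*) : IsEmpty (Z ≃ (Z → Z) ⊕ Z) :=
  ⟨fun e => not_injective_sum_arrow_self e.symm e.symm.injective⟩

/-- There is no type `Z` with `Z ≃ ((Z → Z) ⊕ Z)`; consequently, for the
behaviour family `𝔉(V, W) = (X ↦ (V → X) ⊕ W)` of endofunctors of `Type`,
there is no endofunctor `B` of `Type` with a terminal coalgebra of carrier `Z`
and a natural isomorphism `B ≅ 𝔉(Z, Z)`: the higher-order fixed-point equation
`B ≅ 𝔉(|νB|, |νB|)` has no solution in `Type`. -/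
theorem no_higher_order_solution_in_Type :
    (∀ Z : Type u, IsEmpty (Z ≃ ((Z → Z) ⊕ Z))) ∧
    (∀ (B : Type u ⥤ Type u) (CB : Endofunctor.Coalgebra B),
        Nonempty (IsTerminal CB) →
        Nonempty (B ≅ inputOutputFunctor CB.V CB.V) → False) := by
  refine ⟨isEmpty_equiv_sum_arrow_self, ?_⟩
  rintro B CB ⟨hCB⟩ ⟨i⟩
  have := Endofunctor.Coalgebra.Terminal.str_isIso hCB
  exact (isEmpty_equiv_sum_arrow_self CB.V).false (asIso CB.str ≪≫ i.app CB.V).toEquiv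
end
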